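/- arXiv:2204.01085 — 2 statements merged into one kernel-verified Lean document; each statement's English description precedes it below -/
import Mathlib

section
/- For every S ∈ GL(2, F), the autotopism σ_S : (x,y) ↦ (xS, yS) is a collineation of the Hall affine plane A_H, and it acts on lines by σ_S([c]) = [cS] and σ_S([m, k]) = [(a·m)S, kS], where a = (1,0)S⁻¹ and a·m denotes the Hall product. -/
open Polynomial

/-- The Hall system multiplication on `F × F`, with defining polynomial `x^2 - r*x - s`. -/
def hallMul {F : Type*} [Field F] [DecidableEq F] (r s : F) (a b : F × F) : F × F :=
  if b.2 = 0 then (a.1 * b.1, a.2 * b.1)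
  else (a.1 * b.1 - a.2 * b.2⁻¹ * (b.1 ^ 2 - r * b.1 - s),
        a.1 * b.2 - a.2 * b.1 + a.2 * r)

/-- Vertical line `[c] = {(c, y)}` in the Hall affine plane. -/
def vertLine {F : Type*} (c : F × F) : Set ((F × F) × (F × F)) := {P | P.1 = c}

/-- Non-vertical line `[m, k] = {(x, x·m + k)}` in the Hall affine plane. -/
def slopeLine {F : Type*} [Field F] [DecidableEq F] (r s : F) (m k : F × F) :
    Set ((F × F) × (F × F)) :=
  {P | P.2 = hallMul r s P.1 m + k}

/-- The lines of the Hall affine plane `A_H`. -/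
def IsHallLine {F : Type*} [Field F] [DecidableEq F] (r s : F)
    (ℓ : Set ((F × F) × (F × F))) : Prop :=
  (∃ c : F × F, ℓ = vertLine c) ∨ ∃ m k : F × F, ℓ = slopeLine r s m k

/-- A collineation of the Hall affine plane: a bijection of the point set mapping
every line onto a line. -/
def IsCollineation {F : Type*} [Field F] [DecidableEq F] (r s : F)
    (φ : (F × F) × (F × F) → (F × F) × (F × F)) : Prop :=
  Function.Bijective φ ∧ ∀ ℓ, IsHallLine r s ℓ → IsHallLine r s (φ '' ℓ)

/-- Right action of a `2 × 2` matrix on a row vector `x = (x₁, x₂)`. -/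
def rmul {F : Type*} [Field F] (S : Matrix (Fin 2) (Fin 2) F) (x : F × F) : F × F :=
  (x.1 * S 0 0 + x.2 * S 1 0, x.1 * S 0 1 + x.2 * S 1 1)

/-- The autotopism `σ_S : (x,y) ↦ (xS, yS)`. -/
def sigmaMap {F : Type*} [Field F] (S : Matrix (Fin 2) (Fin 2) F) :
    (F × F) × (F × F) → (F × F) × (F × F) :=
  fun P => (rmul S P.1, rmul S P.2)

/-- The matrix of right Hall multiplication by `m`. -/
def Mmat {F : Type*} [Field F] [DecidableEq F] (r s : F) (m : F × F) :
    Matrix (Fin 2) (Fin 2) F :=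
  if m.2 = 0 then !![m.1, 0; 0, m.1]
  else !![m.1, m.2; -m.2⁻¹ * (m.1 ^ 2 - r * m.1 - s), r - m.1]

section Aux

variable {F : Type*} [Field F] [DecidableEq F] (r s : F)

omit [DecidableEq F] in
lemma rmul_rmul (A B : Matrix (Fin 2) (Fin 2) F) (x : F × F) :
    rmul B (rmul A x) = rmul (A * B) x := by
  simp only [rmul, Matrix.mul_apply, Fin.sum_univ_two, Prod.mk.injEq]
  constructor <;> ring

omit [DecidableEq F] in
lemma rmul_one (x : F × F) : rmul (1 : Matrix (Fin 2) (Fin 2) F) x = x := by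
  simp [rmul, Matrix.one_apply]

omit [DecidableEq F] in
lemma rmul_add (A : Matrix (Fin 2) (Fin 2) F) (u v : F × F) :
    rmul A (u + v) = rmul A u + rmul A v := by
  simp only [rmul, Prod.fst_add, Prod.snd_add, Prod.mk_add_mk, Prod.mk.injEq]
  constructor <;> ring

lemma hallMul_eq_rmul (x m : F × F) : hallMul r s x m = rmul (Mmat r s m) x := by
  by_cases h : m.2 = 0 <;> simp [hallMul, Mmat, rmul, h] <;> try (constructor <;> ring)

omit [DecidableEq F] in
lemma rmul_e1 (T : Matrix (Fin 2) (Fin 2) F) : rmul T ((1 : F), (0 : F)) = (T 0 0, T 0 1) := by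
  simp [rmul]

omit [DecidableEq F] in
lemma no_root (hirr : Irreducible (X ^ 2 - C r * X - C s : F[X])) (t : F) :
    t ^ 2 - r * t - s ≠ 0 := by
  intro h
  have hroot : IsRoot (X ^ 2 - C r * X - C s : F[X]) t := by
    simp [IsRoot, h]
  obtain ⟨g, hg⟩ := dvd_iff_isRoot.mpr hroot
  rcases hirr.isUnit_or_isUnit hg with h1 | h2
  · exact Polynomial.not_isUnit_X_sub_C t h1
  · have hdeg : (X ^ 2 - C r * X - C s : F[X]).natDegree = 2 := by
      compute_degree!
    have hq0 : g.natDegree = 0 := natDegree_eq_zero_of_isUnit h2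
    have hne : (X - C t : F[X]) ≠ 0 := X_sub_C_ne_zero t
    have hgne : g ≠ 0 := h2.ne_zero
    have : (X ^ 2 - C r * X - C s : F[X]).natDegree = 1 := by
      rw [hg, natDegree_mul hne hgne, natDegree_X_sub_C, hq0]
    omega

/-- The spread-set property: scalar or satisfying `T² = rT + sI`. -/
def InSpread (T : Matrix (Fin 2) (Fin 2) F) : Prop :=
  (∃ c : F, T = c • (1 : Matrix (Fin 2) (Fin 2) F)) ∨
    T * T = r • T + s • (1 : Matrix (Fin 2) (Fin 2) F)

lemma Mmat_inSpread (m : F × F) : InSpread r s (Mmat r s m) := by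
  by_cases h : m.2 = 0
  · left
    exact ⟨m.1, by ext i j; fin_cases i <;> fin_cases j <;> simp [Mmat, h, Matrix.one_apply]⟩
  · right
    rw [Mmat, if_neg h, Matrix.mul_fin_two, Matrix.one_fin_two, Matrix.smul_of, Matrix.smul_of]
    simp only [Matrix.smul_cons, Matrix.smul_empty, smul_eq_mul, Matrix.add_cons,
      Matrix.head_cons, Matrix.tail_cons, Matrix.empty_add_empty, Matrix.of_add_of]
    have h1 : m.1 * m.1 + m.2 * (-m.2⁻¹ * (m.1 ^ 2 - r * m.1 - s)) = r * m.1 + s * 1 := by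
      field_simp; ring
    have h2 : m.1 * m.2 + m.2 * (r - m.1) = r * m.2 + s * 0 := by ring
    have h3 : -m.2⁻¹ * (m.1 ^ 2 - r * m.1 - s) * m.1 +
        (r - m.1) * (-m.2⁻¹ * (m.1 ^ 2 - r * m.1 - s))
        = r * (-m.2⁻¹ * (m.1 ^ 2 - r * m.1 - s)) + s * 0 := by field_simp; ring
    have h4 : -m.2⁻¹ * (m.1 ^ 2 - r * m.1 - s) * m.2 + (r - m.1) * (r - m.1)
        = r * (r - m.1) + s * 1 := by field_simp; ring
    rw [h1, h2, h3, h4]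

lemma spread_eq_Mmat (hirr : Irreducible (X ^ 2 - C r * X - C s : F[X]))
    (T : Matrix (Fin 2) (Fin 2) F) (hT : InSpread r s T) :
    T = Mmat r s (T 0 0, T 0 1) := by
  rcases hT with ⟨c, rfl⟩ | hT
  · ext i j
    fin_cases i <;> fin_cases j <;> simp [Mmat, Matrix.one_apply]
  · have e00 := congrFun (congrFun hT 0) 0
    have e01 := congrFun (congrFun hT 0) 1
    have e10 := congrFun (congrFun hT 1) 0
    have e11 := congrFun (congrFun hT 1) 1
    simp only [Matrix.mul_apply, Fin.sum_univ_two, Matrix.add_apply, Matrix.smul_apply,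
      Matrix.one_apply_eq, Matrix.one_apply_ne (by decide : (0 : Fin 2) ≠ 1),
      Matrix.one_apply_ne (by decide : (1 : Fin 2) ≠ 0), smul_eq_mul] at e00 e01 e10 e11
    have h01 : T 0 1 ≠ 0 := by
      intro h0
      rw [h0] at e00
      exact no_root r s hirr (T 0 0) (by linear_combination e00)
    have hb10 : T 1 0 = -(T 0 1)⁻¹ * (T 0 0 ^ 2 - r * T 0 0 - s) := by
      field_simp
      linear_combination e00
    have hb11 : T 1 1 = r - T 0 0 := by
      have := mul_left_cancel₀ h01 (show T 0 1 * T 1 1 = T 0 1 * (r - T 0 0) by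
        linear_combination e01)
      exact this
    ext i j
    fin_cases i <;> fin_cases j <;>
      simp only [Mmat, h01, if_neg, ite_false, Matrix.cons_val', Matrix.cons_val_zero,
        Matrix.cons_val_one, Matrix.head_cons, Matrix.empty_val', Matrix.cons_val_fin_one,
        Matrix.head_fin_const]
    · rfl
    · rfl
    · exact hb10
    · exact hb11

lemma inSpread_conj (A B : Matrix (Fin 2) (Fin 2) F) (hAB : A * B = 1) (hBA : B * A = 1)
    (T : Matrix (Fin 2) (Fin 2) F) (hT : InSpread r s T) : InSpread r s (B * T * A) := by
  rcases hT with ⟨c, rfl⟩ | hT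
  · left
    exact ⟨c, by rw [Matrix.mul_smul, mul_one, Matrix.smul_mul, hBA]⟩
  · right
    have : B * T * A * (B * T * A) = B * (T * T) * A := by
      rw [Matrix.mul_assoc (B * T) A (B * T * A), ← Matrix.mul_assoc A (B * T) A,
        ← Matrix.mul_assoc A B T, hAB, Matrix.one_mul, Matrix.mul_assoc B T (T * A),
        ← Matrix.mul_assoc T T A, ← Matrix.mul_assoc B (T * T) A]
    rw [this, hT]
    rw [Matrix.mul_add, Matrix.add_mul]
    congr 1
    · rw [Matrix.mul_smul, Matrix.smul_mul]
    · rw [Matrix.mul_smul, mul_one, Matrix.smul_mul, hBA]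

end Aux

/-- Every autotopism `σ_S` (for `S ∈ GL(2,F)`) is a collineation of the Hall affine plane,
with `σ_S([c]) = [cS]` and `σ_S([m,k]) = [(a·m)S, kS]` where `a = (1,0)S⁻¹`. -/
theorem sigma_collineation {F : Type*} [Field F] [Fintype F] [DecidableEq F]
    (q : ℕ) (hq : Fintype.card F = q) (r s : F)
    (hirr : Irreducible (X ^ 2 - C r * X - C s : F[X])) (S : GL (Fin 2) F) :
    IsCollineation r s (sigmaMap (S : Matrix (Fin 2) (Fin 2) F)) ∧
    (∀ c : F × F, sigmaMap (S : Matrix (Fin 2) (Fin 2) F) '' vertLine c =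
      vertLine (rmul (S : Matrix (Fin 2) (Fin 2) F) c)) ∧
    (∀ m k : F × F, sigmaMap (S : Matrix (Fin 2) (Fin 2) F) '' slopeLine r s m k =
      slopeLine r s
        (rmul (S : Matrix (Fin 2) (Fin 2) F)
          (hallMul r s (rmul ((S⁻¹ : GL (Fin 2) F) : Matrix (Fin 2) (Fin 2) F) (1, 0)) m))
        (rmul (S : Matrix (Fin 2) (Fin 2) F) k)) := by
  set A : Matrix (Fin 2) (Fin 2) F := (S : Matrix (Fin 2) (Fin 2) F) with hA
  set B : Matrix (Fin 2) (Fin 2) F := ((S⁻¹ : GL (Fin 2) F) : Matrix (Fin 2) (Fin 2) F) with hB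
  have hAB : A * B = 1 := S.mul_inv
  have hBA : B * A = 1 := S.inv_mul
  have hBAx : ∀ x : F × F, rmul A (rmul B x) = x := fun x => by
    rw [rmul_rmul, hBA, rmul_one]
  have hABx : ∀ x : F × F, rmul B (rmul A x) = x := fun x => by
    rw [rmul_rmul, hAB, rmul_one]
  -- the key identity
  have key : ∀ (m x : F × F),
      hallMul r s (rmul A x) (rmul A (hallMul r s (rmul B (1, 0)) m)) =
        rmul A (hallMul r s x m) := by
    intro m x
    set T' : Matrix (Fin 2) (Fin 2) F := B * Mmat r s m * A with hT'
    have hsp : InSpread r s T' := inSpread_conj r s A B hAB hBA _ (Mmat_inSpread r s m)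
    have hm' : rmul A (hallMul r s (rmul B (1, 0)) m) = (T' 0 0, T' 0 1) := by
      rw [hallMul_eq_rmul, rmul_rmul, rmul_rmul, ← rmul_e1 T', hT', Matrix.mul_assoc]
    rw [hm', hallMul_eq_rmul, ← spread_eq_Mmat r s hirr T' hsp, hallMul_eq_rmul,
      rmul_rmul, rmul_rmul, hT']
    congr 1
    rw [← Matrix.mul_assoc, ← Matrix.mul_assoc, hAB, Matrix.one_mul]
  -- bijectivity
  have hbij : Function.Bijective (sigmaMap A) := by
    refine Function.bijective_iff_has_inverse.mpr ⟨sigmaMap B, ?_, ?_⟩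
    · intro P; simp [sigmaMap, hABx]
    · intro P; simp [sigmaMap, hBAx]
  -- vertical lines
  have hvert : ∀ c : F × F, sigmaMap A '' vertLine c = vertLine (rmul A c) := by
    intro c
    ext P
    constructor
    · rintro ⟨Q, hQ, rfl⟩
      simp only [vertLine, Set.mem_setOf_eq, sigmaMap] at hQ ⊢
      rw [hQ]
    · intro hP
      refine ⟨(rmul B P.1, rmul B P.2), ?_, ?_⟩
      · simp only [vertLine, Set.mem_setOf_eq] at hP ⊢
        rw [hP, hABx]
      · simp [sigmaMap, hBAx]
  -- slope lines
  have hslope : ∀ m k : F × F, sigmaMap A '' slopeLine r s m k =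
      slopeLine r s (rmul A (hallMul r s (rmul B (1, 0)) m)) (rmul A k) := by
    intro m k
    ext P
    constructor
    · rintro ⟨Q, hQ, rfl⟩
      simp only [slopeLine, Set.mem_setOf_eq] at hQ ⊢
      simp only [sigmaMap]
      rw [hQ, rmul_add, key]
    · intro hP
      refine ⟨(rmul B P.1, rmul B P.2), ?_, ?_⟩
      · simp only [slopeLine, Set.mem_setOf_eq] at hP ⊢
        have := congrArg (rmul B) hP
        rw [rmul_add, hABx] at this
        rw [this]
        congr 1
        have := key m (rmul B P.1)
        rw [hBAx] at this
        rw [this, hABx]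
      · simp [sigmaMap, hBAx]
  exact ⟨⟨hbij, fun ℓ hℓ => by
    rcases hℓ with ⟨c, rfl⟩ | ⟨m, k, rfl⟩
    · exact Or.inl ⟨rmul A c, hvert c⟩
    · exact Or.inr ⟨_, _, hslope m k⟩⟩, hvert, hslope⟩
end

section
/- The group of collineations of the Hall affine plane A_H generated by all translations τ_{a,b} and all linear maps λ_{a,b} acts transitively on the set of all BF lines (the lines that are vertical or of type 1). -/
open Polynomial

/-- The BF lines: vertical lines and type 1 lines (slope in the basefield). -/
def BFlines {F : Type*} [Field F] [DecidableEq F] (r s : F) :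
    Set (Set ((F × F) × (F × F))) :=
  {ℓ | (∃ c : F × F, ℓ = vertLine c) ∨ ∃ m k : F × F, m.2 = 0 ∧ ℓ = slopeLine r s m k}

/-- The NBF lines: type 2 lines (slope not in the basefield). -/
def NBFlines {F : Type*} [Field F] [DecidableEq F] (r s : F) :
    Set (Set ((F × F) × (F × F))) :=
  {ℓ | ∃ m k : F × F, m.2 ≠ 0 ∧ ℓ = slopeLine r s m k}

/-- The translation `τ_{a,b} : (x,y) ↦ (x + a, y + b)`. -/
def tauMap {F : Type*} [Field F] (a b : F × F) :
    (F × F) × (F × F) → (F × F) × (F × F) :=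
  fun P => (P.1 + a, P.2 + b)

/-- The linear map `λ_{a,b} : (x,y) ↦ ((-ar+b)·x + a·y, as·x + b·y)`. -/
def lambdaMap {F : Type*} [Field F] (r s a b : F) :
    (F × F) × (F × F) → (F × F) × (F × F) :=
  fun P => ((-(a * r) + b) • P.1 + a • P.2, (a * s) • P.1 + b • P.2)

/-- The translations, as permutations of the point set. -/
def TRperms (F : Type*) [Field F] : Set (Equiv.Perm ((F × F) × (F × F))) :=
  {g | ∃ a b : F × F, ⇑g = tauMap a b}

/-- The linear maps `λ_{a,b}`, as permutations of the point set. -/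
def LNRperms {F : Type*} [Field F] (r s : F) : Set (Equiv.Perm ((F × F) × (F × F))) :=
  {g | ∃ a b : F, (a, b) ≠ ((0 : F), (0 : F)) ∧ ⇑g = lambdaMap r s a b}

/-!
Every BF line is the image of the vertical line `[0]` under a product of generators: `[c]` is the
translate of `[0]` by `τ_{c,0}`, and `[(m, 0), k]` is the image of `[0]` under `τ_{0,k} ∘ λ_{1,m}`.
Here `λ_{1,m}` is invertible because its determinant `m² - m r - s = f(m)` does not vanish, `f`
being irreducible. Composing one such product with the inverse of another gives transitivity.
-/

section Maps

variable {F : Type*} [Field F]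

def tauPerm (a b : F × F) : Equiv.Perm ((F × F) × (F × F)) :=
  (Equiv.addRight a).prodCongr (Equiv.addRight b)

lemma coe_tauPerm (a b : F × F) : ⇑(tauPerm a b) = tauMap a b := rfl

def lambdaDet (r s a b : F) : F := b ^ 2 - a * b * r - a ^ 2 * s

lemma lambdaMap_smul (r s a b c : F) (P : (F × F) × (F × F)) :
    lambdaMap r s a b (c • P) = c • lambdaMap r s a b P := by
  ext1 <;> simp only [lambdaMap, Prod.smul_fst, Prod.smul_snd] <;> module

/-- With `θ = [[r, -1], [-s, 0]]`, a root of `f`, `λ_{a,b}` is `b - a θ` and `λ_{-a, b - a r}` is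
its conjugate `b - a (r - θ)`, so their product is the norm of `b - a θ`. -/
lemma lambdaMap_lambdaMap_conj (r s a b : F) (P : (F × F) × (F × F)) :
    lambdaMap r s a b (lambdaMap r s (-a) (b - a * r) P) = lambdaDet r s a b • P := by
  ext1 <;> simp only [lambdaMap, lambdaDet, Prod.smul_fst, Prod.smul_snd] <;> module

lemma lambdaMap_conj_lambdaMap (r s a b : F) (P : (F × F) × (F × F)) :
    lambdaMap r s (-a) (b - a * r) (lambdaMap r s a b P) = lambdaDet r s a b • P := by
  ext1 <;> simp only [lambdaMap, lambdaDet, Prod.smul_fst, Prod.smul_snd] <;> module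

def lambdaPerm (r s a b : F) (hdet : lambdaDet r s a b ≠ 0) :
    Equiv.Perm ((F × F) × (F × F)) where
  toFun := lambdaMap r s a b
  invFun P := (lambdaDet r s a b)⁻¹ • lambdaMap r s (-a) (b - a * r) P
  left_inv P := by dsimp only; rw [lambdaMap_conj_lambdaMap, inv_smul_smul₀ hdet]
  right_inv P := by dsimp only; rw [lambdaMap_smul, lambdaMap_lambdaMap_conj, inv_smul_smul₀ hdet]

lemma coe_lambdaPerm (r s a b : F) (hdet : lambdaDet r s a b ≠ 0) :
    ⇑(lambdaPerm r s a b hdet) = lambdaMap r s a b := rfl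

lemma lambdaDet_ne_zero_of_irreducible {r s a b : F}
    (hirr : Irreducible (X ^ 2 - C r * X - C s : F[X])) (hab : (a, b) ≠ (0, 0)) :
    lambdaDet r s a b ≠ 0 := by
  have hdeg : (X ^ 2 - C r * X - C s : F[X]).natDegree = 2 := by compute_degree!
  have hroot := hirr.not_isRoot_of_natDegree_ne_one (by omega) (x := b / a)
  rw [lambdaDet]
  rcases eq_or_ne a 0 with rfl | ha
  · simpa using hab
  · intro h
    apply hroot
    simp only [IsRoot, eval_sub, eval_pow, eval_X, eval_mul, eval_C]
    field_simp
    linear_combination h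

lemma tauMap_image_vertLine (a b c : F × F) : tauMap a b '' vertLine c = vertLine (c + a) := by
  ext ⟨x, y⟩
  simp only [tauMap, vertLine, Set.mem_image, Set.mem_ofPred_eq, Prod.mk.injEq]
  constructor
  · rintro ⟨P, rfl, rfl, -⟩
    rfl
  · rintro rfl
    exact ⟨(c, y - b), rfl, rfl, sub_add_cancel y b⟩

end Maps

section Lines

variable {F : Type*} [Field F] [DecidableEq F]

lemma tauMap_zero_image_slopeLine (r s : F) (b m k : F × F) :
    tauMap 0 b '' slopeLine r s m k = slopeLine r s m (k + b) := by
  ext ⟨x, y⟩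
  simp only [tauMap, slopeLine, Set.mem_image, Set.mem_ofPred_eq, Prod.mk.injEq, add_zero]
  constructor
  · rintro ⟨P, hP, rfl, rfl⟩
    rw [hP, add_assoc]
  · intro h
    exact ⟨(x, y - b), by dsimp only; rw [h]; abel, rfl, sub_add_cancel y b⟩

lemma hallMul_mk_zero (r s b : F) (x : F × F) : hallMul r s x (b, 0) = b • x := by
  simp [hallMul, Prod.ext_iff, mul_comm]

lemma lambdaMap_one_image_vertLine_zero (r s b : F) :
    lambdaMap r s 1 b '' vertLine 0 = slopeLine r s (b, 0) 0 := by
  ext ⟨x, y⟩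
  simp only [lambdaMap, vertLine, slopeLine, Set.mem_image, Set.mem_ofPred_eq, Prod.mk.injEq,
    hallMul_mk_zero, add_zero]
  constructor
  · rintro ⟨P, hP, rfl, rfl⟩
    simp [hP]
  · rintro rfl
    exact ⟨(0, x), rfl, by simp, by simp⟩

lemma exists_mem_closure_image_vertLine_zero {r s : F}
    (hirr : Irreducible (X ^ 2 - C r * X - C s : F[X])) {ℓ : Set ((F × F) × (F × F))}
    (hℓ : ℓ ∈ BFlines r s) :
    ∃ g ∈ Subgroup.closure (TRperms F ∪ LNRperms r s), ⇑g '' vertLine 0 = ℓ := by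
  have tauPerm_mem (a b : F × F) : tauPerm a b ∈ Subgroup.closure (TRperms F ∪ LNRperms r s) :=
    Subgroup.subset_closure (Or.inl ⟨a, b, rfl⟩)
  rcases hℓ with ⟨c, rfl⟩ | ⟨⟨m, _⟩, k, rfl : _ = 0, rfl⟩
  · exact ⟨tauPerm c 0, tauPerm_mem c 0, by rw [coe_tauPerm, tauMap_image_vertLine, zero_add]⟩
  · have hdet := lambdaDet_ne_zero_of_irreducible hirr (a := 1) (b := m) (by simp)
    refine ⟨tauPerm 0 k * lambdaPerm r s 1 m hdet,
      mul_mem (tauPerm_mem 0 k) (Subgroup.subset_closure (Or.inr ⟨1, m, by simp, rfl⟩)), ?_⟩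
    rw [Equiv.Perm.coe_mul, Set.image_comp, coe_lambdaPerm, lambdaMap_one_image_vertLine_zero,
      coe_tauPerm, tauMap_zero_image_slopeLine, zero_add]

end Lines

theorem TR_LNR_transitive_on_BF_general {F : Type*} [Field F] [DecidableEq F]
    (r s : F)
    (hirr : Irreducible (X ^ 2 - C r * X - C s : F[X])) :
    ∀ ℓ ℓ' : Set ((F × F) × (F × F)), ℓ ∈ BFlines r s → ℓ' ∈ BFlines r s →
      ∃ g ∈ Subgroup.closure (TRperms F ∪ LNRperms r s), ⇑g '' ℓ = ℓ' := by
  intro ℓ ℓ' hℓ hℓ'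
  obtain ⟨g, hg, rfl⟩ := exists_mem_closure_image_vertLine_zero hirr hℓ
  obtain ⟨g', hg', rfl⟩ := exists_mem_closure_image_vertLine_zero hirr hℓ'
  refine ⟨g' * g⁻¹, mul_mem hg' (inv_mem hg), ?_⟩
  rw [Equiv.Perm.coe_mul, Set.image_comp, Equiv.Perm.coe_inv, Equiv.symm_image_image]

/-- The group generated by the translations and the linear maps acts transitively on the
set of all BF lines. -/
theorem TR_LNR_transitive_on_BF {F : Type*} [Field F] [Fintype F] [DecidableEq F]
    (q : ℕ) (hq : Fintype.card F = q) (r s : F)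
    (hirr : Irreducible (X ^ 2 - C r * X - C s : F[X])) :
    ∀ ℓ ℓ' : Set ((F × F) × (F × F)), ℓ ∈ BFlines r s → ℓ' ∈ BFlines r s →
      ∃ g ∈ Subgroup.closure (TRperms F ∪ LNRperms r s), ⇑g '' ℓ = ℓ' :=
  TR_LNR_transitive_on_BF_general r s hirr
end
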